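/- arXiv:0907.5338 — 2 statements merged into one kernel-verified Lean document; each statement's English description precedes it below -/
import Mathlib

section
/- Let f : (0,∞) → (0,∞) be operator monotone. Then the function h₃(t) = 1/f(t), defined for t > 0, is operator convex. -/
open Matrix Kronecker ComplexOrder

/-- Functional calculus: apply `g : ℝ → ℝ` to a Hermitian matrix via its spectral
decomposition (junk value `0` on non-Hermitian matrices). -/
noncomputable def matFun {ι : Type} [Fintype ι] [DecidableEq ι] (g : ℝ → ℝ)
    (M : Matrix ι ι ℂ) : Matrix ι ι ℂ :=
  if hM : M.IsHermitian then
    ∑ i, (g (hM.eigenvalues i) : ℂ) •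
      Matrix.vecMulVec (⇑(hM.eigenvectorBasis i)) (star ⇑(hM.eigenvectorBasis i))
  else 0

/-- Operator monotonicity on `(0,∞)`: monotone w.r.t. the Loewner order on positive
definite complex Hermitian matrices of all sizes. -/
def OperatorMonotone (g : ℝ → ℝ) : Prop :=
  ∀ (k : ℕ) (A B : Matrix (Fin k) (Fin k) ℂ), A.PosDef → B.PosDef →
    (B - A).PosSemidef → (matFun g B - matFun g A).PosSemidef

/-- Operator convexity on `(0,∞)` for positive definite complex Hermitian matrices
of all sizes. -/
def OperatorConvex (g : ℝ → ℝ) : Prop :=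
  ∀ (k : ℕ) (A B : Matrix (Fin k) (Fin k) ℂ), A.PosDef → B.PosDef →
    ∀ t : ℝ, 0 ≤ t → t ≤ 1 →
      (t • matFun g A + (1 - t) • matFun g B - matFun g (t • A + (1 - t) • B)).PosSemidef

/-!
An operator monotone `f > 0` is operator concave, while `X ↦ X⁻¹` is operator antitone and
operator convex; for `C = t A + (1 - t) B` this gives
`f(C)⁻¹ ≤ (t f(A) + (1 - t) f(B))⁻¹ ≤ t f(A)⁻¹ + (1 - t) f(B)⁻¹`.

Concavity is the Hansen–Pedersen argument. Conjugating `diag(A, B)` by the rotation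
`[[c, s], [-s, c]]` with `c² = t`, `s² = 1 - t` gives a block matrix with corner `C`, and a Schur
complement shows that it lies below `diag(C + η, S + r)` once `r` is large. Monotonicity of `f`
followed by compression to the corner gives `t f(A) + (1 - t) f(B) ≤ f(C + η)` for every `η > 0`.
Letting `η → 0` needs right continuity of `f`, and the same inequality for `1 × 1` matrices
provides it. Both inverse inequalities are Schur complement statements about the positive block
matrix `[[X, 1], [1, X⁻¹]]`.
-/

open scoped MatrixOrder

namespace Matrix

section SchurComplement

variable {𝕜 n : Type*} [RCLike 𝕜]

lemma PosDef.smul_add_smul {A B : Matrix n n 𝕜} (hA : A.PosDef) (hB : B.PosDef) {t : ℝ}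
    (ht₀ : 0 ≤ t) (ht₁ : t ≤ 1) : (t • A + (1 - t) • B).PosDef := by
  rcases ht₁.lt_or_eq with ht₁ | rfl
  · exact PosDef.posSemidef_add (hA.posSemidef.smul ht₀) (hB.smul (sub_pos.2 ht₁))
  · simpa using hA

lemma le_of_fromBlocks_le_fromBlocks {m : Type*} {A A' : Matrix n n 𝕜} {B B' : Matrix n m 𝕜}
    {C C' : Matrix m n 𝕜} {D D' : Matrix m m 𝕜}
    (h : fromBlocks A B C D ≤ fromBlocks A' B' C' D') : A ≤ A' :=
  le_iff.2 ((le_iff.1 h).submatrix Sum.inl)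

variable [Fintype n] [DecidableEq n]

lemma posSemidef_fromBlocks_one_inv {A : Matrix n n 𝕜} (hA : A.PosDef) :
    (fromBlocks A 1 1 A⁻¹).PosSemidef := by
  have := hA.isUnit.invertible
  simpa using (PosDef.fromBlocks₁₁ (1 : Matrix n n 𝕜) A⁻¹ hA).2 (by simpa using PosSemidef.zero)

lemma PosDef.inv_le_inv_of_le {A B : Matrix n n 𝕜} (hA : A.PosDef) (hAB : A ≤ B) :
    B⁻¹ ≤ A⁻¹ := by
  have hB : B.PosDef := by simpa using hA.add_posSemidef hAB
  have := hB.isUnit.invertible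
  have := hA.isUnit.invertible
  have := hA.inv.isUnit.invertible
  have hblock : (fromBlocks B 1 1 A⁻¹).PosSemidef := by
    simpa using (PosDef.fromBlocks₂₂ B (1 : Matrix n n 𝕜) hA.inv).2 (by simpa using le_iff.1 hAB)
  have h := (PosDef.fromBlocks₁₁ (1 : Matrix n n 𝕜) A⁻¹ hB).1 (by simpa using hblock)
  exact le_iff.2 (by simpa using h)

lemma PosDef.inv_smul_add_smul_le {A B : Matrix n n 𝕜} (hA : A.PosDef) (hB : B.PosDef) {t : ℝ}
    (ht₀ : 0 ≤ t) (ht₁ : t ≤ 1) :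
    (t • A + (1 - t) • B)⁻¹ ≤ t • A⁻¹ + (1 - t) • B⁻¹ := by
  have hC := hA.smul_add_smul hB ht₀ ht₁
  have := hC.isUnit.invertible
  have hblock : (fromBlocks (t • A + (1 - t) • B) 1 1 (t • A⁻¹ + (1 - t) • B⁻¹)).PosSemidef := by
    have h := ((posSemidef_fromBlocks_one_inv hA).smul ht₀).add
      ((posSemidef_fromBlocks_one_inv hB).smul (sub_nonneg.2 ht₁))
    rwa [fromBlocks_smul, fromBlocks_smul, fromBlocks_add, ← add_smul, add_sub_cancel,
      one_smul] at h
  have h := (PosDef.fromBlocks₁₁ (1 : Matrix n n 𝕜) _ hC).1 (by simpa using hblock)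
  exact le_iff.2 (by simpa using h)

lemma fromBlocks_le_fromBlocks_zero_iff {m : Type*} [Fintype m] {C C' : Matrix m m 𝕜}
    (R : Matrix m n 𝕜) (S : Matrix n n 𝕜) {r : ℝ} (hr : 0 < r) :
    fromBlocks C R Rᴴ S ≤ fromBlocks C' 0 0 (S + r • 1) ↔ r⁻¹ • (R * Rᴴ) ≤ C' - C := by
  have hD : (r • (1 : Matrix n n 𝕜)).PosDef := PosDef.one.smul hr
  have := hD.isUnit.invertible
  have hinv : (r • (1 : Matrix n n 𝕜))⁻¹ = r⁻¹ • 1 :=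
    inv_eq_left_inv (by rw [smul_mul_smul_comm, inv_mul_cancel₀ hr.ne', one_mul, one_smul])
  have hdiff : fromBlocks C' 0 0 (S + r • 1) - fromBlocks C R Rᴴ S =
      fromBlocks (C' - C) (-R) (-R)ᴴ (r • 1) := by
    ext (i | i) (j | j) <;> simp
  rw [le_iff, le_iff, hdiff, PosDef.fromBlocks₂₂ _ _ hD, hinv]
  simp [sub_sub]

end SchurComplement

section BlockRotation

variable (𝕜 : Type*) {m : Type*} [RCLike 𝕜] [DecidableEq m]

def blockRotation (c s : ℝ) : Matrix (m ⊕ m) (m ⊕ m) 𝕜 :=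
  fromBlocks (c • 1) (s • 1) (-s • 1) (c • 1)

variable {𝕜} [Fintype m]

lemma blockRotation_mul_fromBlocks_mul_conjTranspose (c s : ℝ) (A B : Matrix m m 𝕜) :
    blockRotation 𝕜 c s * fromBlocks A 0 0 B * (blockRotation 𝕜 c s)ᴴ =
      fromBlocks (c ^ 2 • A + s ^ 2 • B) ((c * s) • (B - A)) ((c * s) • (B - A))
        (s ^ 2 • A + c ^ 2 • B) := by
  simp only [blockRotation, fromBlocks_conjTranspose, fromBlocks_multiply, conjTranspose_smul,
    conjTranspose_one, conjTranspose_neg, star_trivial, Matrix.smul_mul, Matrix.mul_smul,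
    one_mul, mul_one, mul_zero, add_zero, zero_add, neg_smul, neg_mul, mul_neg, smul_smul]
  congr 1 <;> module

lemma blockRotation_mem_unitaryGroup {c s : ℝ} (h : c ^ 2 + s ^ 2 = 1) :
    blockRotation 𝕜 c s ∈ unitaryGroup (m ⊕ m) 𝕜 := by
  have := blockRotation_mul_fromBlocks_mul_conjTranspose c s (1 : Matrix m m 𝕜) 1
  rw [fromBlocks_one, mul_one] at this
  rw [mem_unitaryGroup_iff, star_eq_conjTranspose, this]
  simp [← add_smul, h, add_comm (s ^ 2)]

end BlockRotation

lemma mul_diagonal_comp_eq_diagonal_comp_mul {ι R : Type*} [Fintype ι] [DecidableEq ι]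
    [CommRing R] [NoZeroDivisors R] {W : Matrix ι ι R} {μ ν : ι → R}
    (h : W * diagonal μ = diagonal ν * W) (g : R → R) :
    W * diagonal (g ∘ μ) = diagonal (g ∘ ν) * W := by
  ext i j
  have hij := congr_fun₂ h i j
  simp only [mul_diagonal, diagonal_mul, Function.comp_apply] at hij ⊢
  rcases eq_or_ne (W i j) 0 with hW | hW
  · simp [hW]
  · rw [mul_left_cancel₀ hW (hij.trans (mul_comm _ _)), mul_comm]

section FunctionalCalculus

variable {ι κ : Type} [Fintype ι] [DecidableEq ι] [Fintype κ] [DecidableEq κ]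

noncomputable def conjDiagonal (U : unitaryGroup ι ℂ) (μ : ι → ℝ) : Matrix ι ι ℂ :=
  Unitary.conjStarAlgAut ℂ _ U (diagonal fun i => (μ i : ℂ))

lemma isHermitian_conjDiagonal (U : unitaryGroup ι ℂ) (μ : ι → ℝ) :
    (conjDiagonal U μ).IsHermitian :=
  IsSelfAdjoint.map (show IsSelfAdjoint (diagonal fun i => (μ i : ℂ)) from
    isHermitian_diagonal_of_self_adjoint _ (by ext; simp)) _

lemma IsHermitian.eq_conjDiagonal {M : Matrix ι ι ℂ} (hM : M.IsHermitian) :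
    M = conjDiagonal hM.eigenvectorUnitary hM.eigenvalues :=
  hM.spectral_theorem

lemma IsHermitian.matFun_eq_conjDiagonal {M : Matrix ι ι ℂ} (hM : M.IsHermitian) (g : ℝ → ℝ) :
    matFun g M = conjDiagonal hM.eigenvectorUnitary (g ∘ hM.eigenvalues) := by
  ext a b
  rw [conjDiagonal, Unitary.conjStarAlgAut_apply, mul_apply]
  simp [matFun, hM, mul_diagonal, IsHermitian.eigenvectorUnitary_apply, vecMulVec_apply,
    Matrix.sum_apply, mul_assoc, mul_left_comm]

/-- `matFun` is defined through Mathlib's choice of eigenbasis; this lets it be computed from any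
unitary diagonalization: `star V * U` intertwines the two diagonals, hence also their images
under `g`. -/
lemma conjDiagonal_comp_of_eq {U V : unitaryGroup ι ℂ} {μ ν : ι → ℝ}
    (h : conjDiagonal U μ = conjDiagonal V ν) (g : ℝ → ℝ) :
    conjDiagonal U (g ∘ μ) = conjDiagonal V (g ∘ ν) := by
  simp only [conjDiagonal, Unitary.conjStarAlgAut_apply] at h ⊢
  have hUV : (star (V : Matrix ι ι ℂ) * U) * diagonal (fun i => (μ i : ℂ)) =
      diagonal (fun i => (ν i : ℂ)) * (star (V : Matrix ι ι ℂ) * U) := by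
    calc (star (V : Matrix ι ι ℂ) * U) * diagonal (fun i => (μ i : ℂ))
        = star (V : Matrix ι ι ℂ) * (U * diagonal (fun i => (μ i : ℂ)) *
            star (U : Matrix ι ι ℂ)) * U := by
          simp [mul_assoc]
      _ = diagonal (fun i => (ν i : ℂ)) * (star (V : Matrix ι ι ℂ) * U) := by
          rw [h]; simp [← mul_assoc]
  have hg := mul_diagonal_comp_eq_diagonal_comp_mul hUV (fun z => (g z.re : ℂ))
  simp only [Function.comp_def, Complex.ofReal_re] at hg
  calc (U : Matrix ι ι ℂ) * diagonal (fun i => (g (μ i) : ℂ)) * star (U : Matrix ι ι ℂ)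
      = V * ((star (V : Matrix ι ι ℂ) * U) * diagonal (fun i => (g (μ i) : ℂ))) *
          star (U : Matrix ι ι ℂ) := by
        simp [← mul_assoc]
    _ = V * diagonal (fun i => (g (ν i) : ℂ)) * star (V : Matrix ι ι ℂ) := by
        rw [hg]; simp [mul_assoc]

lemma matFun_conjDiagonal (g : ℝ → ℝ) (U : unitaryGroup ι ℂ) (μ : ι → ℝ) :
    matFun g (conjDiagonal U μ) = conjDiagonal U (g ∘ μ) := by
  have hM := isHermitian_conjDiagonal U μ
  rw [hM.matFun_eq_conjDiagonal]
  exact conjDiagonal_comp_of_eq hM.eq_conjDiagonal.symm g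

section conjDiagonal

variable (U : unitaryGroup ι ℂ)

lemma conjDiagonal_add (μ ν : ι → ℝ) :
    conjDiagonal U μ + conjDiagonal U ν = conjDiagonal U (μ + ν) := by
  simp only [conjDiagonal, ← map_add, diagonal_add, Pi.add_apply, Complex.ofReal_add]

lemma conjDiagonal_sub (μ ν : ι → ℝ) :
    conjDiagonal U μ - conjDiagonal U ν = conjDiagonal U (μ - ν) := by
  simp only [conjDiagonal, ← map_sub, diagonal_sub, Pi.sub_apply, Complex.ofReal_sub]

lemma conjDiagonal_mul (μ ν : ι → ℝ) :
    conjDiagonal U μ * conjDiagonal U ν = conjDiagonal U (μ * ν) := by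
  simp only [conjDiagonal, ← map_mul, diagonal_mul_diagonal, Pi.mul_apply, Complex.ofReal_mul]

lemma conjDiagonal_const (r : ℝ) : conjDiagonal U (fun _ => r) = r • 1 := by
  rw [conjDiagonal, ← smul_one_eq_diagonal, map_smul, map_one, Complex.coe_smul]

lemma posSemidef_conjDiagonal_iff {μ : ι → ℝ} : (conjDiagonal U μ).PosSemidef ↔ 0 ≤ μ := by
  rw [conjDiagonal, Unitary.conjStarAlgAut_apply,
    IsUnit.posSemidef_star_right_conjugate_iff Unitary.isUnit_coe, posSemidef_diagonal_iff]
  simp [Pi.le_def]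

lemma posDef_conjDiagonal_iff {μ : ι → ℝ} : (conjDiagonal U μ).PosDef ↔ ∀ i, 0 < μ i := by
  rw [conjDiagonal, Unitary.conjStarAlgAut_apply,
    IsUnit.posDef_star_right_conjugate_iff Unitary.isUnit_coe, posDef_diagonal_iff]
  simp

lemma conjDiagonal_le_conjDiagonal_iff {μ ν : ι → ℝ} :
    conjDiagonal U μ ≤ conjDiagonal U ν ↔ μ ≤ ν := by
  rw [le_iff, conjDiagonal_sub, posSemidef_conjDiagonal_iff, sub_nonneg]

end conjDiagonal

lemma exists_le_smul_one {M : Matrix ι ι ℂ} (hM : M.IsHermitian) : ∃ τ : ℝ, M ≤ τ • 1 := by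
  refine ⟨∑ i, |hM.eigenvalues i|, ?_⟩
  conv_lhs => rw [hM.eq_conjDiagonal]
  rw [← conjDiagonal_const, conjDiagonal_le_conjDiagonal_iff]
  intro i
  exact (le_abs_self _).trans
    (Finset.single_le_sum (f := fun j => |hM.eigenvalues j|) (fun j _ => abs_nonneg _)
      (Finset.mem_univ i))

lemma le_of_forall_pos_le_add_smul_one {X Y : Matrix ι ι ℂ}
    (h : ∀ δ : ℝ, 0 < δ → X ≤ Y + δ • 1) : X ≤ Y := by
  have hH : (Y - X).IsHermitian := by
    simpa [add_sub_right_comm] using (le_iff.1 (h 1 one_pos)).1.sub isHermitian_one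
  rw [le_iff, hH.eq_conjDiagonal, posSemidef_conjDiagonal_iff]
  intro i
  refine le_of_forall_pos_le_add fun δ hδ => ?_
  have hδ := le_iff.1 (h δ hδ)
  rw [add_sub_right_comm, hH.eq_conjDiagonal, ← conjDiagonal_const, conjDiagonal_add,
    posSemidef_conjDiagonal_iff] at hδ
  simpa using hδ i

lemma matFun_smul_one (g : ℝ → ℝ) (r : ℝ) : matFun g (r • 1 : Matrix ι ι ℂ) = g r • 1 := by
  rw [← conjDiagonal_const 1, matFun_conjDiagonal, ← conjDiagonal_const 1]
  rfl

lemma smul_one_le_smul_one_iff [Nonempty ι] {r s : ℝ} :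
    (r • 1 : Matrix ι ι ℂ) ≤ s • 1 ↔ r ≤ s := by
  rw [← conjDiagonal_const 1, ← conjDiagonal_const 1, conjDiagonal_le_conjDiagonal_iff]
  exact ⟨fun h => h (Classical.arbitrary ι), fun h _ => h⟩

lemma IsHermitian.matFun_add_smul_one {M : Matrix ι ι ℂ} (hM : M.IsHermitian) (g : ℝ → ℝ)
    (r : ℝ) : matFun g (M + r • 1) = matFun (fun x => g (x + r)) M := by
  rw [hM.eq_conjDiagonal, ← conjDiagonal_const, conjDiagonal_add, matFun_conjDiagonal,
    matFun_conjDiagonal]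
  rfl

lemma IsHermitian.matFun_add_const {M : Matrix ι ι ℂ} (hM : M.IsHermitian) (g : ℝ → ℝ)
    (r : ℝ) : matFun (fun x => g x + r) M = matFun g M + r • 1 := by
  rw [hM.eq_conjDiagonal, ← conjDiagonal_const, matFun_conjDiagonal, matFun_conjDiagonal,
    conjDiagonal_add]
  rfl

lemma IsHermitian.matFun_le_matFun_of_forall_le {M : Matrix ι ι ℂ} (hM : M.IsHermitian)
    {g h : ℝ → ℝ} (hgh : ∀ i, g (hM.eigenvalues i) ≤ h (hM.eigenvalues i)) :
    matFun g M ≤ matFun h M := by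
  rw [hM.matFun_eq_conjDiagonal, hM.matFun_eq_conjDiagonal, conjDiagonal_le_conjDiagonal_iff]
  exact hgh

lemma PosDef.posDef_matFun {M : Matrix ι ι ℂ} (hM : M.PosDef) {g : ℝ → ℝ}
    (hg : ∀ x > 0, 0 < g x) : (matFun g M).PosDef := by
  rw [hM.1.matFun_eq_conjDiagonal, posDef_conjDiagonal_iff]
  exact fun i => hg _ (hM.eigenvalues_pos i)

lemma PosDef.matFun_one_div {M : Matrix ι ι ℂ} (hM : M.PosDef) {g : ℝ → ℝ}
    (hg : ∀ x > 0, 0 < g x) : matFun (fun x => 1 / g x) M = (matFun g M)⁻¹ := by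
  refine (inv_eq_left_inv ?_).symm
  rw [hM.1.matFun_eq_conjDiagonal, hM.1.matFun_eq_conjDiagonal, conjDiagonal_mul]
  convert conjDiagonal_const _ 1 using 2
  · ext i
    simp [(hg _ (hM.eigenvalues_pos i)).ne']
  · simp

lemma conjDiagonal_mul_unitary (V U : unitaryGroup ι ℂ) (μ : ι → ℝ) :
    (V : Matrix ι ι ℂ) * conjDiagonal U μ * star (V : Matrix ι ι ℂ) = conjDiagonal (V * U) μ := by
  rw [conjDiagonal, conjDiagonal, Unitary.conjStarAlgAut_mul_apply]
  rfl

lemma matFun_unitary_conj {M : Matrix ι ι ℂ} (hM : M.IsHermitian) (V : unitaryGroup ι ℂ)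
    (g : ℝ → ℝ) :
    matFun g ((V : Matrix ι ι ℂ) * M * star (V : Matrix ι ι ℂ)) =
      (V : Matrix ι ι ℂ) * matFun g M * star (V : Matrix ι ι ℂ) := by
  rw [hM.eq_conjDiagonal, conjDiagonal_mul_unitary, matFun_conjDiagonal, matFun_conjDiagonal,
    conjDiagonal_mul_unitary]

lemma submatrix_mem_unitaryGroup {U : Matrix ι ι ℂ} (hU : U ∈ unitaryGroup ι ℂ) (e : κ ≃ ι) :
    U.submatrix e e ∈ unitaryGroup κ ℂ := by
  rw [mem_unitaryGroup_iff, star_eq_conjTranspose] at *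
  rw [conjTranspose_submatrix, submatrix_mul_equiv, hU, submatrix_one_equiv]

lemma submatrix_conjDiagonal (U : unitaryGroup ι ℂ) (μ : ι → ℝ) (e : κ ≃ ι) :
    (conjDiagonal U μ).submatrix e e =
      conjDiagonal ⟨_, submatrix_mem_unitaryGroup U.2 e⟩ (μ ∘ e) := by
  simp only [conjDiagonal, Unitary.conjStarAlgAut_apply, star_eq_conjTranspose]
  rw [conjTranspose_submatrix, ← submatrix_mul_equiv _ _ _ e, ← submatrix_mul_equiv _ _ _ e,
    submatrix_diagonal_equiv]
  rfl

lemma matFun_submatrix {M : Matrix ι ι ℂ} (hM : M.IsHermitian) (e : κ ≃ ι) (g : ℝ → ℝ) :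
    matFun g (M.submatrix e e) = (matFun g M).submatrix e e := by
  rw [hM.eq_conjDiagonal, submatrix_conjDiagonal, matFun_conjDiagonal, matFun_conjDiagonal,
    submatrix_conjDiagonal]
  rfl

lemma fromBlocks_zero_mem_unitaryGroup {U : Matrix ι ι ℂ} {V : Matrix κ κ ℂ}
    (hU : U ∈ unitaryGroup ι ℂ) (hV : V ∈ unitaryGroup κ ℂ) :
    fromBlocks U 0 0 V ∈ unitaryGroup (ι ⊕ κ) ℂ := by
  rw [mem_unitaryGroup_iff, star_eq_conjTranspose] at *
  simp [fromBlocks_conjTranspose, fromBlocks_multiply, hU, hV]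

lemma fromBlocks_conjDiagonal (U : unitaryGroup ι ℂ) (V : unitaryGroup κ ℂ) (μ : ι → ℝ)
    (ν : κ → ℝ) :
    fromBlocks (conjDiagonal U μ) 0 0 (conjDiagonal V ν) =
      conjDiagonal ⟨_, fromBlocks_zero_mem_unitaryGroup U.2 V.2⟩ (Sum.elim μ ν) := by
  have : (fun i => ((Sum.elim μ ν i : ℝ) : ℂ)) =
      Sum.elim (fun i => (μ i : ℂ)) (fun i => (ν i : ℂ)) := by
    ext (i | i) <;> rfl
  simp [conjDiagonal, this, ← fromBlocks_diagonal, star_eq_conjTranspose, fromBlocks_conjTranspose,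
    fromBlocks_multiply]

lemma matFun_fromBlocks_zero {A : Matrix ι ι ℂ} {B : Matrix κ κ ℂ} (hA : A.IsHermitian)
    (hB : B.IsHermitian) (g : ℝ → ℝ) :
    matFun g (fromBlocks A 0 0 B) = fromBlocks (matFun g A) 0 0 (matFun g B) := by
  rw [hA.eq_conjDiagonal, hB.eq_conjDiagonal, fromBlocks_conjDiagonal, matFun_conjDiagonal,
    matFun_conjDiagonal, matFun_conjDiagonal, fromBlocks_conjDiagonal, Sum.comp_elim]

lemma PosDef.fromBlocks_zero {A : Matrix ι ι ℂ} {B : Matrix κ κ ℂ} (hA : A.PosDef)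
    (hB : B.PosDef) : (fromBlocks A 0 0 B).PosDef := by
  rw [hA.1.eq_conjDiagonal, hB.1.eq_conjDiagonal, fromBlocks_conjDiagonal, posDef_conjDiagonal_iff]
  rintro (i | i)
  exacts [hA.eigenvalues_pos i, hB.eigenvalues_pos i]

end FunctionalCalculus

end Matrix

namespace OperatorMonotone

open Filter Topology

variable {f : ℝ → ℝ} {ι : Type} [Fintype ι] [DecidableEq ι]

theorem matFun_le_matFun (hf : OperatorMonotone f) {A B : Matrix ι ι ℂ} (hA : A.PosDef)
    (hB : B.PosDef) (hAB : A ≤ B) : matFun f A ≤ matFun f B := by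
  let e := (Fintype.equivFin ι).symm
  have h := hf _ (A.submatrix e e) (B.submatrix e e) (hA.submatrix e.injective)
    (hB.submatrix e.injective) (by simpa [submatrix_sub] using (le_iff.1 hAB).submatrix e)
  rw [matFun_submatrix hA.1, matFun_submatrix hB.1] at h
  exact le_iff.2 ((posSemidef_submatrix_equiv e).1 (by simpa [submatrix_sub] using h))

theorem monotoneOn (hf : OperatorMonotone f) : MonotoneOn f (Set.Ioi 0) := by
  intro a ha b hb hab
  have h := hf.matFun_le_matFun (ι := Unit) (PosDef.one.smul ha) (PosDef.one.smul hb)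
    (smul_one_le_smul_one_iff.2 hab)
  rwa [matFun_smul_one, matFun_smul_one, smul_one_le_smul_one_iff] at h

theorem smul_add_smul_le_matFun_of_le (hf : OperatorMonotone f) {A B C : Matrix ι ι ℂ}
    (hA : A.PosDef) (hB : B.PosDef) {t : ℝ} (ht₀ : 0 ≤ t) (ht₁ : t ≤ 1) {r : ℝ} (hr : 0 < r)
    (hC : (t * (1 - t) / r) • ((B - A) * (B - A)) ≤ C - (t • A + (1 - t) • B)) :
    t • matFun f A + (1 - t) • matFun f B ≤ matFun f C := by
  have hc : √t ^ 2 = t := Real.sq_sqrt ht₀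
  have hs : √(1 - t) ^ 2 = 1 - t := Real.sq_sqrt (sub_nonneg.2 ht₁)
  let V : unitaryGroup (ι ⊕ ι) ℂ :=
    ⟨blockRotation ℂ √t √(1 - t), blockRotation_mem_unitaryGroup (by rw [hc, hs]; ring)⟩
  set R := (√t * √(1 - t)) • (B - A) with hR
  have hRh : Rᴴ = R := by rw [hR, conjTranspose_smul, star_trivial, (hB.1.sub hA.1).eq]
  have hRR : R * Rᴴ = (t * (1 - t)) • ((B - A) * (B - A)) := by
    rw [hRh, hR, Matrix.smul_mul, Matrix.mul_smul, smul_smul, mul_mul_mul_comm,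
      Real.mul_self_sqrt ht₀, Real.mul_self_sqrt (sub_nonneg.2 ht₁)]
  have hT := hA.fromBlocks_zero hB
  have hVT : (V : Matrix (ι ⊕ ι) (ι ⊕ ι) ℂ) * fromBlocks A 0 0 B * star (V : Matrix _ _ ℂ) =
      fromBlocks (t • A + (1 - t) • B) R Rᴴ ((1 - t) • A + t • B) := by
    rw [star_eq_conjTranspose, blockRotation_mul_fromBlocks_mul_conjTranspose, hc, hs, hRh]
  have hle : (V : Matrix (ι ⊕ ι) (ι ⊕ ι) ℂ) * fromBlocks A 0 0 B * star (V : Matrix _ _ ℂ) ≤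
      fromBlocks C 0 0 ((1 - t) • A + t • B + r • 1) := by
    rw [hVT, fromBlocks_le_fromBlocks_zero_iff _ _ hr, hRR, smul_smul, inv_mul_eq_div]
    exact hC
  have hVTpd := (IsUnit.posDef_star_right_conjugate_iff (Unitary.isUnit_coe (U := V))).2 hT
  have hZpd : (fromBlocks C 0 0 ((1 - t) • A + t • B + r • 1)).PosDef := by
    simpa using hVTpd.add_posSemidef (le_iff.1 hle)
  have hCpd : C.PosDef := hZpd.submatrix Sum.inl_injective
  have hDpd : ((1 - t) • A + t • B + r • 1).PosDef := hZpd.submatrix Sum.inr_injective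
  have h := hf.matFun_le_matFun hVTpd hZpd hle
  rw [matFun_unitary_conj hT.1, matFun_fromBlocks_zero hA.1 hB.1, star_eq_conjTranspose,
    blockRotation_mul_fromBlocks_mul_conjTranspose, matFun_fromBlocks_zero hCpd.1 hDpd.1, hc,
    hs] at h
  exact le_of_fromBlocks_le_fromBlocks h

theorem smul_add_smul_le_matFun_add_smul_one (hf : OperatorMonotone f) {A B : Matrix ι ι ℂ}
    (hA : A.PosDef) (hB : B.PosDef) {t : ℝ} (ht₀ : 0 ≤ t) (ht₁ : t ≤ 1) {η : ℝ} (hη : 0 < η) :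
    t • matFun f A + (1 - t) • matFun f B ≤ matFun f (t • A + (1 - t) • B + η • 1) := by
  obtain ⟨τ, hτ⟩ := exists_le_smul_one (M := (B - A) * (B - A))
    (by simpa [(hB.1.sub hA.1).eq] using isHermitian_mul_conjTranspose_self (B - A))
  have hτ' : 0 < |τ| + 1 := by positivity
  have hone : (0 : Matrix ι ι ℂ) ≤ 1 := nonneg_iff_posSemidef.2 PosSemidef.one
  refine hf.smul_add_smul_le_matFun_of_le hA hB ht₀ ht₁ (div_pos hτ' hη) ?_
  rw [add_sub_cancel_left]
  calc (t * (1 - t) / ((|τ| + 1) / η)) • ((B - A) * (B - A))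
      ≤ (t * (1 - t) / ((|τ| + 1) / η)) • ((|τ| + 1) • 1 : Matrix ι ι ℂ) := by
        refine smul_le_smul_of_nonneg_left (hτ.trans ?_) ?_
        · exact smul_le_smul_of_nonneg_right (by linarith [le_abs_self τ]) hone
        · exact div_nonneg (mul_nonneg ht₀ (sub_nonneg.2 ht₁)) (by positivity)
    _ = (t * (1 - t) * η) • 1 := by rw [smul_smul]; field_simp
    _ ≤ η • 1 := smul_le_smul_of_nonneg_right (by nlinarith [sq_nonneg (t - 1 / 2)]) hone

theorem mul_add_mul_le (hf : OperatorMonotone f) {p q : ℝ} (hp : 0 < p) (hq : 0 < q) {t : ℝ}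
    (ht₀ : 0 ≤ t) (ht₁ : t ≤ 1) {η : ℝ} (hη : 0 < η) :
    t * f p + (1 - t) * f q ≤ f (t * p + (1 - t) * q + η) := by
  have h := hf.smul_add_smul_le_matFun_add_smul_one (ι := Unit) (PosDef.one.smul hp)
    (PosDef.one.smul hq) ht₀ ht₁ hη
  simpa only [smul_smul, ← add_smul, matFun_smul_one, smul_one_le_smul_one_iff] using h

theorem mul_apply_add_sub_le (hf : OperatorMonotone f) {p x ε : ℝ} (hp : 0 < p) (hpx : p < x)
    (hε : 0 < ε) : (x - p) * (f (x + ε) - f x) ≤ 2 * ε * (f x - f p) := by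
  have hD : 0 < x - p + 2 * ε := by linarith
  -- the weight `t = 2ε / (x - p + 2ε)` puts `t p + (1 - t)(x + ε)` strictly below `x`
  have h := hf.mul_add_mul_le hp (q := x + ε) (by linarith) (t := 2 * ε / (x - p + 2 * ε)) (by positivity)
    (by rw [div_le_one hD]; linarith) (η := ε * (x - p) / (x - p + 2 * ε))
    (div_pos (mul_pos hε (sub_pos.2 hpx)) hD)
  have hx : 2 * ε / (x - p + 2 * ε) * p + (1 - 2 * ε / (x - p + 2 * ε)) * (x + ε) +
      ε * (x - p) / (x - p + 2 * ε) = x := by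
    field_simp; ring
  rw [hx, ← mul_le_mul_iff_of_pos_left hD] at h
  field_simp at h
  linarith

theorem tendsto_apply_add_nhdsGT (hf : OperatorMonotone f) {x : ℝ} (hx : 0 < x) :
    Tendsto (fun η => f (x + η)) (𝓝[>] 0) (𝓝 (f x)) := by
  set K := 4 * (f x - f (x / 2)) / x
  have hbound : Tendsto (fun η => f x + K * η) (𝓝[>] 0) (𝓝 (f x)) :=
    tendsto_nhdsWithin_of_tendsto_nhds ((by fun_prop : Continuous fun η => f x + K * η).tendsto' 0
      (f x) (by simp))
  refine tendsto_of_tendsto_of_tendsto_of_le_of_le' tendsto_const_nhds hbound ?_ ?_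
  all_goals filter_upwards [self_mem_nhdsWithin] with η (hη : 0 < η)
  · exact hf.monotoneOn hx (Set.mem_Ioi.2 (by linarith)) (by linarith)
  · have h := hf.mul_apply_add_sub_le (half_pos hx) (half_lt_self hx) hη
    rw [← sub_le_iff_le_add', mul_comm K, mul_div_assoc', le_div_iff₀ hx]
    linarith

theorem smul_add_smul_le_matFun (hf : OperatorMonotone f) {A B : Matrix ι ι ℂ} (hA : A.PosDef)
    (hB : B.PosDef) {t : ℝ} (ht₀ : 0 ≤ t) (ht₁ : t ≤ 1) :
    t • matFun f A + (1 - t) • matFun f B ≤ matFun f (t • A + (1 - t) • B) := by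
  have hC := hA.smul_add_smul hB ht₀ ht₁
  refine le_of_forall_pos_le_add_smul_one fun δ hδ => ?_
  have hev : ∀ᶠ η in 𝓝[>] 0, ∀ i, f (hC.1.eigenvalues i + η) < f (hC.1.eigenvalues i) + δ :=
    eventually_all.2 fun i =>
      (hf.tendsto_apply_add_nhdsGT (hC.eigenvalues_pos i)).eventually
        (eventually_lt_nhds (lt_add_of_pos_right _ hδ))
  obtain ⟨η, hηδ, hη⟩ := (hev.and self_mem_nhdsWithin).exists
  calc t • matFun f A + (1 - t) • matFun f B
      ≤ matFun f (t • A + (1 - t) • B + η • 1) :=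
        hf.smul_add_smul_le_matFun_add_smul_one hA hB ht₀ ht₁ hη
    _ = matFun (fun x => f (x + η)) (t • A + (1 - t) • B) := hC.1.matFun_add_smul_one f η
    _ ≤ matFun (fun x => f x + δ) (t • A + (1 - t) • B) :=
        hC.1.matFun_le_matFun_of_forall_le fun i => (hηδ i).le
    _ = matFun f (t • A + (1 - t) • B) + δ • 1 := hC.1.matFun_add_const f δ

end OperatorMonotone

/-- If `f : (0,∞) → (0,∞)` is operator monotone, then `h₃(t) = 1/f(t)` is
operator convex on `(0,∞)`. -/
theorem operatorConvex_one_div_of_operatorMonotone (f : ℝ → ℝ)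
    (hf_pos : ∀ t > 0, 0 < f t) (hf_mono : OperatorMonotone f) :
    OperatorConvex (fun t => 1 / f t) := by
  intro k A B hA hB t ht₀ ht₁
  have hfA := hA.posDef_matFun hf_pos
  have hfB := hB.posDef_matFun hf_pos
  rw [hA.matFun_one_div hf_pos, hB.matFun_one_div hf_pos,
    (hA.smul_add_smul hB ht₀ ht₁).matFun_one_div hf_pos]
  refine le_iff.1 ?_
  calc (matFun f (t • A + (1 - t) • B))⁻¹ ≤ (t • matFun f A + (1 - t) • matFun f B)⁻¹ :=
        (hfA.smul_add_smul hfB ht₀ ht₁).inv_le_inv_of_le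
          (hf_mono.smul_add_smul_le_matFun hA hB ht₀ ht₁)
    _ ≤ t • (matFun f A)⁻¹ + (1 - t) • (matFun f B)⁻¹ := hfA.inv_smul_add_smul_le hfB ht₀ ht₁
end

section
/- Let 0 < p < 1 and let A be a fixed n×n complex Hermitian matrix. Then the Wigner-Yanase-Dyson skew information ρ ↦ −(1/2)·Tr([ρ^p, A]·[ρ^{1−p}, A]) is convex on the set of n×n positive semidefinite density matrices: for positive semidefinite density matrices ρ, σ and λ ∈ [0,1], −(1/2)·Tr([(λρ+(1−λ)σ)^p, A]·[(λρ+(1−λ)σ)^{1−p}, A]) ≤ −(λ/2)·Tr([ρ^p, A]·[ρ^{1−p}, A]) − ((1−λ)/2)·Tr([σ^p, A]·[σ^{1−p}, A]). -/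
/-!
Since `ρ^p ρ^{1-p} = ρ`, the skew information is `Tr(ρA²) - Tr(ρ^p A ρ^{1-p} A)`, and the first
term is affine in `ρ`; it remains to show that `S(ρ) = Tr(ρ^p A ρ^{1-p} A)` is concave. With `L`
and `R` the commuting positive operators of left and right multiplication by `ρ`,
`S(ρ) = ⟪A, L^p R^{1-p} A⟫`, and `x^p y^{1-p}` is a positive multiple of
`∫₀^∞ s^{p-2} (x : s y) ds`, where `x : y = x y / (x + y)` is the parallel sum. The parallel sum
of operators has the variational form
`⟪A, (L : s R) A⟫ = min_Y (⟪A - Y, L (A - Y)⟫ + s ⟪Y, R Y⟫)`,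
a minimum of functions affine in `ρ`, hence concave in `ρ`; integrating in `s` keeps concavity.
-/

open Matrix Kronecker ComplexOrder

/-- The Wigner-Yanase-Dyson skew information `−(1/2)·Tr([ρᵖ,A]·[ρ^{1−p},A])`,
with the matrix powers defined through the functional calculus. -/
noncomputable def wyd {k : ℕ} (p : ℝ) (ρ A : Matrix (Fin k) (Fin k) ℂ) : ℂ :=
  -(1 / 2) * Matrix.trace
    ((matFun (fun x => x ^ p) ρ * A - A * matFun (fun x => x ^ p) ρ) *
      (matFun (fun x => x ^ (1 - p)) ρ * A - A * matFun (fun x => x ^ (1 - p)) ρ))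

open MeasureTheory Set Real

lemma integrableOn_rpow_sub_one_div_one_add {p : ℝ} (hp0 : 0 < p) (hp1 : p < 1) :
    IntegrableOn (fun s : ℝ => s ^ (p - 1) / (1 + s)) (Ioi 0) := by
  have hcont : ContinuousOn (fun s : ℝ => s ^ (p - 1) / (1 + s)) (Ioi 0) := fun s hs =>
    ((continuousAt_rpow_const s _ (Or.inl (ne_of_gt hs))).div (by fun_prop)
      (by linarith [mem_Ioi.1 hs])).continuousWithinAt
  rw [← Ioc_union_Ioi_eq_Ioi zero_le_one]
  refine IntegrableOn.union ?_ ?_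
  · rw [integrableOn_Ioc_iff_integrableOn_Ioo]
    refine ((intervalIntegral.integrableOn_Ioo_rpow_iff (s := p - 1) zero_lt_one).2
      (by linarith)).mono' ((hcont.mono Ioo_subset_Ioi_self).aestronglyMeasurable
        measurableSet_Ioo) ?_
    filter_upwards [ae_restrict_mem measurableSet_Ioo] with s hs
    have hs0 : 0 < s := hs.1
    rw [norm_of_nonneg (by positivity)]
    exact div_le_self (rpow_nonneg hs0.le _) (le_add_of_nonneg_right hs0.le)
  · refine (integrableOn_Ioi_rpow_of_lt (by linarith : p - 2 < -1) zero_lt_one).mono'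
      ((hcont.mono (Ioi_subset_Ioi zero_le_one)).aestronglyMeasurable measurableSet_Ioi) ?_
    filter_upwards [ae_restrict_mem measurableSet_Ioi] with s (hs : 1 < s)
    rw [norm_of_nonneg (by positivity), div_le_iff₀ (by positivity),
      show p - 1 = p - 2 + 1 by ring, rpow_add_one (by positivity)]
    have := rpow_nonneg (zero_le_one.trans hs.le) (p - 2)
    nlinarith

/-- Its value is `π / sin (π p)`, but only its positivity matters here. -/
noncomputable def rpowDivOneAddIntegral (p : ℝ) : ℝ :=
  ∫ s in Ioi (0 : ℝ), s ^ (p - 1) / (1 + s)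

lemma rpowDivOneAddIntegral_pos {p : ℝ} (hp0 : 0 < p) (hp1 : p < 1) :
    0 < rpowDivOneAddIntegral p := by
  have hpos : ∀ s ∈ Ioi (0 : ℝ), 0 < s ^ (p - 1) / (1 + s) := fun s (hs : 0 < s) => by
    positivity
  rw [rpowDivOneAddIntegral, setIntegral_pos_iff_support_of_nonneg_ae
    ((ae_restrict_iff' measurableSet_Ioi).2 (ae_of_all _ fun s hs => (hpos s hs).le))
    (integrableOn_rpow_sub_one_div_one_add hp0 hp1),
    inter_eq_self_of_subset_right fun s hs => Function.mem_support.2 (hpos s hs).ne']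
  simp

lemma rpow_mul_parallel_eq {p x y s : ℝ} (hx : 0 < x) (hy : 0 < y) (hs : 0 < s) :
    s ^ (p - 2) * (x * (s * y) / (x + s * y)) =
      x ^ p * y ^ (1 - p) * (y / x) * ((y / x * s) ^ (p - 1) / (1 + y / x * s)) := by
  rw [rpow_sub hs, rpow_sub hy, rpow_sub (by positivity), mul_rpow (by positivity) hs.le,
    div_rpow hy.le hx.le]
  simp only [rpow_one, rpow_two]
  field_simp

/-- The substitution `s ↦ (y / x) s` reduces the integral to `rpowDivOneAddIntegral p`. -/
lemma integral_rpow_mul_parallel {p x y : ℝ} (hp0 : 0 < p) (hp1 : p < 1) (hx : 0 ≤ x)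
    (hy : 0 ≤ y) :
    Integrable (fun s => s ^ (p - 2) * (x * (s * y) / (x + s * y))) (volume.restrict (Ioi 0)) ∧
      ∫ s in Ioi (0 : ℝ), s ^ (p - 2) * (x * (s * y) / (x + s * y)) =
        rpowDivOneAddIntegral p * (x ^ p * y ^ (1 - p)) := by
  rcases hx.eq_or_lt with rfl | hx
  · simp [zero_rpow hp0.ne']
  rcases hy.eq_or_lt with rfl | hy
  · simp [zero_rpow (sub_pos.2 hp1).ne']
  have hyx : 0 < y / x := div_pos hy hx
  have heq : EqOn (fun s => s ^ (p - 2) * (x * (s * y) / (x + s * y)))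
      (fun s => x ^ p * y ^ (1 - p) * (y / x) * ((y / x * s) ^ (p - 1) / (1 + y / x * s)))
      (Ioi 0) := fun s hs => rpow_mul_parallel_eq hx hy hs
  constructor
  · refine (integrableOn_congr_fun heq measurableSet_Ioi).2 (Integrable.const_mul ?_ _)
    rw [← IntegrableOn, integrableOn_Ioi_comp_mul_left_iff (fun s => s ^ (p - 1) / (1 + s)) 0 hyx,
      mul_zero]
    exact integrableOn_rpow_sub_one_div_one_add hp0 hp1
  · rw [setIntegral_congr_fun measurableSet_Ioi heq, integral_const_mul,
      integral_comp_mul_left_Ioi (fun s => s ^ (p - 1) / (1 + s)) 0 hyx, mul_zero, smul_eq_mul,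
      rpowDivOneAddIntegral]
    field_simp

lemma isLeast_normSq_sub_add_normSq {a b : ℝ} (ha : 0 ≤ a) (hb : 0 ≤ b) (w : ℂ) :
    IsLeast (range fun c => a * Complex.normSq (w - c) + b * Complex.normSq c)
      (a * b / (a + b) * Complex.normSq w) := by
  rcases (add_nonneg ha hb).eq_or_lt with hab | hab
  · obtain ⟨rfl, rfl⟩ : a = 0 ∧ b = 0 := ⟨by linarith, by linarith⟩
    exact ⟨⟨0, by simp⟩, by rintro _ ⟨c, rfl⟩; simp⟩
  constructor
  · refine ⟨(a / (a + b) : ℝ) * w, ?_⟩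
    have : w - (a / (a + b) : ℝ) * w = (b / (a + b) : ℝ) * w := by
      have hab' : (a : ℂ) + b ≠ 0 := by exact_mod_cast hab.ne'
      push_cast; field_simp; ring
    simp only [this, Complex.normSq_mul, Complex.normSq_ofReal]
    field_simp
    ring
  · rintro _ ⟨c, rfl⟩
    rw [div_mul_eq_mul_div, div_le_iff₀ hab]
    simp only [Complex.normSq_apply, Complex.sub_re, Complex.sub_im]
    nlinarith [sq_nonneg (a * (w.re - c.re) - b * c.re), sq_nonneg (a * (w.im - c.im) - b * c.im),
      mul_nonneg ha hb]

lemma convex_setOf_posSemidef {ι : Type*} : Convex ℝ {ρ : Matrix ι ι ℂ | ρ.PosSemidef} :=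
  fun _ hρ _ hσ _ _ ha hb _ => (hρ.smul ha).add (hσ.smul hb)

section
variable {ι : Type} [Fintype ι]

lemma trace_commutator_mul_commutator {R : Type*} [CommRing R] (X Y A : Matrix ι ι R) :
    trace ((X * A - A * X) * (Y * A - A * Y)) =
      2 * trace (X * A * Y * A) - trace (X * Y * A * A) - trace (Y * X * A * A) := by
  have h₁ : trace (X * A * (A * Y)) = trace (Y * X * A * A) := by
    rw [show X * A * (A * Y) = X * A * A * Y by simp only [mul_assoc], trace_mul_comm]
    simp only [mul_assoc]
  have h₂ : trace (A * X * (Y * A)) = trace (X * Y * A * A) := by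
    rw [show A * X * (Y * A) = A * (X * Y * A) by simp only [mul_assoc], trace_mul_comm]
  have h₃ : trace (A * X * (A * Y)) = trace (X * A * Y * A) := by
    rw [show A * X * (A * Y) = A * (X * A * Y) by simp only [mul_assoc], trace_mul_comm]
  simp only [Matrix.sub_mul, Matrix.mul_sub, trace_sub, h₁, h₂, h₃]
  rw [← mul_assoc (X * A)]
  ring

lemma trace_conj_mul_conj_mul_conjTranspose (U D₁ D₂ X : Matrix ι ι ℂ) :
    trace (U * D₁ * star U * X * (U * D₂ * star U) * Xᴴ) =
      trace (D₁ * (star U * X * U) * D₂ * (star U * X * U)ᴴ) := by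
  rw [show U * D₁ * star U * X * (U * D₂ * star U) * Xᴴ =
    U * (D₁ * star U * X * (U * D₂ * star U) * Xᴴ) by simp only [mul_assoc], trace_mul_comm]
  simp only [conjTranspose_mul, star_eq_conjTranspose, conjTranspose_conjTranspose, mul_assoc]

/-- `⟪A - Y, L (A - Y)⟫ + s ⟪Y, R Y⟫` for the left and right multiplications `L`, `R` by `ρ`
(Hilbert–Schmidt inner product). -/
noncomputable def parallelSumEnergy (s : ℝ) (ρ A Y : Matrix ι ι ℂ) : ℝ :=
  (trace ((A - Y)ᴴ * ρ * (A - Y))).re + s * (trace (Yᴴ * Y * ρ)).re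

lemma parallelSumEnergy_add_smul (s a b : ℝ) (ρ σ A Y : Matrix ι ι ℂ) :
    parallelSumEnergy s (a • ρ + b • σ) A Y =
      a * parallelSumEnergy s ρ A Y + b * parallelSumEnergy s σ A Y := by
  simp only [parallelSumEnergy, Matrix.mul_add, Matrix.add_mul, Matrix.mul_smul, Matrix.smul_mul,
    trace_add, trace_smul, Complex.add_re, Complex.real_smul, Complex.re_ofReal_mul]
  ring

variable [DecidableEq ι]

/-- `⟪X, φ(L, R) X⟫` for the commuting left and right multiplications `L`, `R` by `ρ`, computed
in an eigenbasis of `ρ` (junk value `0` unless `ρ` is Hermitian). -/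
noncomputable def spectralPairSum (φ : ℝ → ℝ → ℝ) (ρ X : Matrix ι ι ℂ) : ℝ :=
  if hρ : ρ.IsHermitian then
    ∑ i, ∑ j, φ (hρ.eigenvalues i) (hρ.eigenvalues j) *
      Complex.normSq ((star (hρ.eigenvectorUnitary : Matrix ι ι ℂ) * X *
        hρ.eigenvectorUnitary) i j)
  else 0

lemma spectralPairSum_const_mul (c : ℝ) (φ : ℝ → ℝ → ℝ) (ρ X : Matrix ι ι ℂ) :
    spectralPairSum (fun x y => c * φ x y) ρ X = c * spectralPairSum φ ρ X := by
  unfold spectralPairSum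
  split_ifs <;> simp [Finset.mul_sum, mul_assoc]

lemma integral_spectralPairSum {μ : Measure ℝ} {ρ : Matrix ι ι ℂ} (hρ : ρ.PosSemidef)
    {φ : ℝ → ℝ → ℝ → ℝ} {ψ : ℝ → ℝ → ℝ}
    (hφ : ∀ x y, 0 ≤ x → 0 ≤ y → Integrable (fun s => φ s x y) μ ∧ ∫ s, φ s x y ∂μ = ψ x y)
    (X : Matrix ι ι ℂ) :
    Integrable (fun s => spectralPairSum (φ s) ρ X) μ ∧
      ∫ s, spectralPairSum (φ s) ρ X ∂μ = spectralPairSum ψ ρ X := by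
  have h := fun i j => hφ _ _ (hρ.eigenvalues_nonneg i) (hρ.eigenvalues_nonneg j)
  simp only [spectralPairSum, dif_pos hρ.1]
  refine ⟨integrable_finsetSum _ fun i _ => integrable_finsetSum _ fun j _ =>
    (h i j).1.mul_const _, ?_⟩
  rw [integral_finsetSum _ fun i _ => integrable_finsetSum _ fun j _ => (h i j).1.mul_const _]
  refine Finset.sum_congr rfl fun i _ => ?_
  rw [integral_finsetSum _ fun j _ => (h i j).1.mul_const _]
  exact Finset.sum_congr rfl fun j _ => by rw [integral_mul_const, (h i j).2]

lemma matFun_eq_cfc {M : Matrix ι ι ℂ} (hM : M.IsHermitian) (g : ℝ → ℝ) :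
    matFun g M = hM.cfc g := by
  rw [IsHermitian.cfc, Unitary.conjStarAlgAut_apply, matFun, dif_pos hM]
  ext a b
  simp only [Matrix.sum_apply, Matrix.smul_apply, vecMulVec_apply, mul_apply, diagonal_apply,
    star_apply, IsHermitian.eigenvectorUnitary_apply, Pi.star_apply, Function.comp_apply, mul_ite,
    mul_zero, Finset.sum_ite_eq', Finset.mem_univ, if_true]
  exact Finset.sum_congr rfl fun _ _ => by simp; ring

lemma matFun_mul_matFun {ρ : Matrix ι ι ℂ} (hρ : ρ.PosSemidef) {f g : ℝ → ℝ}
    (hfg : ∀ x, 0 ≤ x → f x * g x = x) : matFun f ρ * matFun g ρ = ρ := by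
  conv_rhs => rw [hρ.1.spectral_theorem]
  rw [matFun_eq_cfc hρ.1, matFun_eq_cfc hρ.1, IsHermitian.cfc, IsHermitian.cfc, ← map_mul,
    diagonal_mul_diagonal]
  congr 2 with i
  simp [← Complex.ofReal_mul, hfg _ (hρ.eigenvalues_nonneg i)]

lemma matFun_id {ρ : Matrix ι ι ℂ} (hρ : ρ.IsHermitian) : matFun (fun x => x) ρ = ρ := by
  rw [matFun_eq_cfc hρ, IsHermitian.cfc]
  exact hρ.spectral_theorem.symm

lemma matFun_one {ρ : Matrix ι ι ℂ} (hρ : ρ.IsHermitian) : matFun (fun _ => 1) ρ = 1 := by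
  rw [matFun_eq_cfc hρ, IsHermitian.cfc]
  simp [Function.comp_def]

lemma trace_diagonal_mul_mul_diagonal_mul_conjTranspose (d e : ι → ℝ) (C : Matrix ι ι ℂ) :
    trace (diagonal (fun i => (d i : ℂ)) * C * diagonal (fun j => (e j : ℂ)) * Cᴴ) =
      ((∑ i, ∑ j, d i * e j * Complex.normSq (C i j) : ℝ) : ℂ) := by
  simp only [trace, diag, mul_apply, diagonal_apply, ite_mul, zero_mul, mul_ite, mul_zero,
    Finset.sum_ite_eq', Finset.sum_ite_eq, Finset.mem_univ, if_true, conjTranspose_apply]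
  push_cast
  refine Finset.sum_congr rfl fun i _ => Finset.sum_congr rfl fun j _ => ?_
  rw [Complex.normSq_eq_conj_mul_self]
  simp
  ring

lemma trace_matFun_mul_mul_matFun_mul_conjTranspose {ρ : Matrix ι ι ℂ} (hρ : ρ.IsHermitian)
    (f g : ℝ → ℝ) (X : Matrix ι ι ℂ) :
    trace (matFun f ρ * X * matFun g ρ * Xᴴ) = spectralPairSum (fun x y => f x * g y) ρ X := by
  rw [matFun_eq_cfc hρ, matFun_eq_cfc hρ, IsHermitian.cfc, IsHermitian.cfc,
    Unitary.conjStarAlgAut_apply, Unitary.conjStarAlgAut_apply,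
    trace_conj_mul_conj_mul_conjTranspose, spectralPairSum, dif_pos hρ]
  exact trace_diagonal_mul_mul_diagonal_mul_conjTranspose (f ∘ hρ.eigenvalues)
    (g ∘ hρ.eigenvalues) _

lemma trace_conjTranspose_mul_mul {ρ : Matrix ι ι ℂ} (hρ : ρ.IsHermitian) (X : Matrix ι ι ℂ) :
    trace (Xᴴ * ρ * X) = spectralPairSum (fun x _ => x) ρ X := by
  have h := trace_matFun_mul_mul_matFun_mul_conjTranspose hρ (fun x => x) (fun _ => 1) X
  simp only [matFun_id hρ, matFun_one hρ, mul_one] at h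
  rw [← h, trace_mul_cycle, trace_mul_cycle]

lemma trace_conjTranspose_mul_self_mul {ρ : Matrix ι ι ℂ} (hρ : ρ.IsHermitian)
    (X : Matrix ι ι ℂ) : trace (Xᴴ * X * ρ) = spectralPairSum (fun _ y => y) ρ X := by
  have h := trace_matFun_mul_mul_matFun_mul_conjTranspose hρ (fun _ => 1) (fun x => x) X
  simp only [matFun_id hρ, matFun_one hρ, one_mul] at h
  rw [← h, trace_mul_cycle, trace_mul_cycle]

lemma parallelSumEnergy_eq_spectralPairSum {ρ : Matrix ι ι ℂ} (hρ : ρ.IsHermitian) (s : ℝ)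
    (A Y : Matrix ι ι ℂ) :
    parallelSumEnergy s ρ A Y = spectralPairSum (fun x _ => x) ρ (A - Y) +
      s * spectralPairSum (fun _ y => y) ρ Y := by
  rw [parallelSumEnergy, trace_conjTranspose_mul_mul hρ, trace_conjTranspose_mul_self_mul hρ,
    Complex.ofReal_re, Complex.ofReal_re]

/-- In an eigenbasis of `ρ` the energy splits into independent scalar problems, one for each
matrix entry. -/
lemma isLeast_parallelSumEnergy {ρ : Matrix ι ι ℂ} (hρ : ρ.PosSemidef) {s : ℝ} (hs : 0 ≤ s)
    (A : Matrix ι ι ℂ) :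
    IsLeast (range (parallelSumEnergy s ρ A))
      (spectralPairSum (fun x y => x * (s * y) / (x + s * y)) ρ A) := by
  set U : Matrix ι ι ℂ := ↑hρ.1.eigenvectorUnitary
  set ev := hρ.1.eigenvalues
  have hmin := fun i j => isLeast_normSq_sub_add_normSq (hρ.eigenvalues_nonneg i)
    (mul_nonneg hs (hρ.eigenvalues_nonneg j)) ((star U * A * U) i j)
  have henergy : ∀ Y, parallelSumEnergy s ρ A Y = ∑ i, ∑ j,
      (ev i * Complex.normSq ((star U * A * U) i j - (star U * Y * U) i j) +
        s * ev j * Complex.normSq ((star U * Y * U) i j)) := by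
    intro Y
    simp only [parallelSumEnergy_eq_spectralPairSum hρ.1, spectralPairSum, dif_pos hρ.1,
      Finset.mul_sum, ← Finset.sum_add_distrib, Matrix.mul_sub, Matrix.sub_mul, Matrix.sub_apply,
      mul_assoc]
    rfl
  rw [spectralPairSum, dif_pos hρ.1]
  constructor
  · choose c hc using fun i j => (hmin i j).1
    refine ⟨U * Matrix.of c * star U, ?_⟩
    have hU : star U * U = 1 := Unitary.coe_star_mul_self _
    rw [henergy, show star U * (U * Matrix.of c * star U) * U = Matrix.of c by
      simp only [← mul_assoc, hU, one_mul]; rw [mul_assoc, hU, mul_one]]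
    exact Finset.sum_congr rfl fun i _ => Finset.sum_congr rfl fun j _ => hc i j
  · rintro _ ⟨Y, rfl⟩
    rw [henergy]
    exact Finset.sum_le_sum fun i _ => Finset.sum_le_sum fun j _ => (hmin i j).2 ⟨_, rfl⟩

lemma concaveOn_spectralPairSum_parallel {s : ℝ} (hs : 0 ≤ s) (A : Matrix ι ι ℂ) :
    ConcaveOn ℝ {ρ : Matrix ι ι ℂ | ρ.PosSemidef}
      (spectralPairSum (fun x y => x * (s * y) / (x + s * y)) · A) := by
  refine ⟨convex_setOf_posSemidef, fun ρ hρ σ hσ a b ha hb _ => ?_⟩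
  obtain ⟨Y, hY⟩ := (isLeast_parallelSumEnergy ((hρ.smul ha).add (hσ.smul hb)) hs A).1
  dsimp only
  rw [← hY, parallelSumEnergy_add_smul, smul_eq_mul, smul_eq_mul]
  gcongr
  · exact (isLeast_parallelSumEnergy hρ hs A).2 ⟨Y, rfl⟩
  · exact (isLeast_parallelSumEnergy hσ hs A).2 ⟨Y, rfl⟩

lemma concaveOn_spectralPairSum_rpow {p : ℝ} (hp0 : 0 < p) (hp1 : p < 1) (A : Matrix ι ι ℂ) :
    ConcaveOn ℝ {ρ : Matrix ι ι ℂ | ρ.PosSemidef}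
      (spectralPairSum (fun x y => x ^ p * y ^ (1 - p)) · A) := by
  refine ⟨convex_setOf_posSemidef, fun ρ hρ σ hσ a b ha hb hab => ?_⟩
  have hrep : ∀ {τ : Matrix ι ι ℂ}, τ.PosSemidef →
      Integrable (fun s => spectralPairSum (fun x y => s ^ (p - 2) * (x * (s * y) / (x + s * y)))
        τ A) (volume.restrict (Ioi 0)) ∧
      ∫ s in Ioi (0 : ℝ), spectralPairSum (fun x y => s ^ (p - 2) * (x * (s * y) / (x + s * y)))
        τ A = rpowDivOneAddIntegral p * spectralPairSum (fun x y => x ^ p * y ^ (1 - p)) τ A :=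
    fun hτ => by
      rw [← spectralPairSum_const_mul]
      exact integral_spectralPairSum hτ (fun x y hx hy => integral_rpow_mul_parallel hp0 hp1 hx hy) A
  have hbar := convex_setOf_posSemidef hρ hσ ha hb hab
  refine le_of_mul_le_mul_left ?_ (rpowDivOneAddIntegral_pos hp0 hp1)
  dsimp only
  rw [smul_eq_mul, smul_eq_mul, mul_add, mul_left_comm, mul_left_comm _ b, ← (hrep hρ).2,
    ← (hrep hσ).2, ← (hrep hbar).2, ← integral_const_mul, ← integral_const_mul,
    ← integral_add ((hrep hρ).1.const_mul a) ((hrep hσ).1.const_mul b)]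
  refine setIntegral_mono_on (((hrep hρ).1.const_mul a).add ((hrep hσ).1.const_mul b))
    (hrep hbar).1 measurableSet_Ioi fun s (hs : 0 < s) => ?_
  simp only [spectralPairSum_const_mul]
  have hconc := (concaveOn_spectralPairSum_parallel hs.le A).2 hρ hσ ha hb hab
  have hw : 0 ≤ s ^ (p - 2) := rpow_nonneg hs.le _
  rw [smul_eq_mul, smul_eq_mul] at hconc
  linarith [mul_le_mul_of_nonneg_left hconc hw]

end

lemma wyd_eq_trace_sub_spectralPairSum {n : ℕ} {p : ℝ} {ρ A : Matrix (Fin n) (Fin n) ℂ}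
    (hρ : ρ.PosSemidef) (hA : A.IsHermitian) :
    wyd p ρ A = trace (ρ * A * A) - spectralPairSum (fun x y => x ^ p * y ^ (1 - p)) ρ A := by
  have hpq : ∀ q x : ℝ, 0 ≤ x → x ^ q * x ^ (1 - q) = x := fun q x hx => by
    rw [← rpow_add' hx (by norm_num), add_sub_cancel, rpow_one]
  have hXY := matFun_mul_matFun hρ (hpq p)
  have hYX := matFun_mul_matFun hρ (fun x hx => sub_sub_cancel 1 p ▸ hpq (1 - p) x hx)
  have hS := trace_matFun_mul_mul_matFun_mul_conjTranspose hρ.1 (fun x => x ^ p)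
    (fun x => x ^ (1 - p)) A
  rw [hA.eq] at hS
  rw [wyd, trace_commutator_mul_commutator, hXY, hYX, hS]
  ring

theorem wyd_convex_general {n : ℕ} (p : ℝ) (hp0 : 0 < p) (hp1 : p < 1)
    (A : Matrix (Fin n) (Fin n) ℂ) (hA : A.IsHermitian)
    (ρ σ : Matrix (Fin n) (Fin n) ℂ) (hρ : ρ.PosSemidef) (hσ : σ.PosSemidef)
    (t : ℝ) (ht0 : 0 ≤ t) (ht1 : t ≤ 1) :
    wyd p (t • ρ + (1 - t) • σ) A ≤ (t : ℂ) * wyd p ρ A + ((1 - t : ℝ) : ℂ) * wyd p σ A := by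
  have h1t : 0 ≤ 1 - t := sub_nonneg.2 ht1
  have hS := (concaveOn_spectralPairSum_rpow hp0 hp1 A).2 hρ hσ ht0 h1t (by ring)
  simp only [smul_eq_mul] at hS
  have htr : trace ((t • ρ + (1 - t) • σ) * A * A) =
      t * trace (ρ * A * A) + ((1 - t : ℝ) : ℂ) * trace (σ * A * A) := by
    simp only [Matrix.add_mul, Matrix.smul_mul, trace_add, trace_smul, Complex.real_smul]
  rw [wyd_eq_trace_sub_spectralPairSum (convex_setOf_posSemidef hρ hσ ht0 h1t (by ring)) hA,
    wyd_eq_trace_sub_spectralPairSum hρ hA, wyd_eq_trace_sub_spectralPairSum hσ hA, htr,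
    ← sub_nonneg]
  convert Complex.zero_le_real.2 (sub_nonneg.2 hS) using 1
  push_cast
  ring

/-- Convexity of the Wigner-Yanase-Dyson skew information, `0 < p < 1`, in the state
variable on positive semidefinite density matrices (Lieb's theorem). -/
theorem wyd_convex {n : ℕ} (p : ℝ) (hp0 : 0 < p) (hp1 : p < 1)
    (A : Matrix (Fin n) (Fin n) ℂ) (hA : A.IsHermitian)
    (ρ σ : Matrix (Fin n) (Fin n) ℂ) (hρ : ρ.PosSemidef) (hσ : σ.PosSemidef)
    (hρtr : ρ.trace = 1) (hσtr : σ.trace = 1)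
    (t : ℝ) (ht0 : 0 ≤ t) (ht1 : t ≤ 1) :
    wyd p (t • ρ + (1 - t) • σ) A ≤ (t : ℂ) * wyd p ρ A + ((1 - t : ℝ) : ℂ) * wyd p σ A :=
  wyd_convex_general p hp0 hp1 A hA ρ σ hρ hσ t ht0 ht1
end
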